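/- arXiv:2205.06710 — 7 statements merged into one kernel-verified Lean document; each statement's English description precedes it below -/
import Mathlib

section
/- Suppose H is a symmetric positive definite n×n matrix with λ₁ I ⪯ H ⪯ λₙ I (0 < λ₁ ≤ λₙ), g ∈ R^n, and s satisfies sᵀHs = −sᵀg (the CG orthogonality property) together with ‖Hs + g‖ ≤ η‖g‖ for some η ∈ (0, η̄) with η̄ < 1. Then ((1−η̄)/λₙ)‖g‖ ≤ ‖s‖ ≤ (1/λ₁)‖g‖ and −gᵀs ≥ λ₁‖s‖². -/
open scoped RealInnerProductSpace

/-!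
The chain `λ₁‖s‖² ≤ ⟪s, H s⟫ = -⟪g, s⟫ ≤ ‖g‖‖s‖` gives the third claim and, after
dividing by `‖s‖`, the upper bound on `‖s‖`. For the lower bound, the residual condition gives
`(1 - η)‖g‖ ≤ ‖H s‖`, and `‖H s‖ ≤ λₙ‖s‖` follows from `⟪v, H v⟫ ≤ λₙ‖v‖²` by the Cauchy–Schwarz
inequality for the positive semidefinite form `(u, v) ↦ ⟪u, H v⟫`.
-/

namespace ContinuousLinearMap

variable {E : Type*} [NormedAddCommGroup E] [InnerProductSpace ℝ E] {T : E →L[ℝ] E}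

theorem IsPositive.inner_map_sq_le (hT : T.IsPositive) (x y : E) :
    ⟪x, T y⟫ ^ 2 ≤ ⟪x, T x⟫ * ⟪y, T y⟫ := by
  have hyx : ⟪y, T x⟫ = ⟪x, T y⟫ :=
    (hT.inner_left_eq_inner_right y x).symm.trans (real_inner_comm _ _)
  -- `t ↦ ⟪x + t y, T (x + t y)⟫` is a nonnegative quadratic polynomial in `t`
  have hquad : ∀ t : ℝ, 0 ≤ ⟪y, T y⟫ * (t * t) + 2 * ⟪x, T y⟫ * t + ⟪x, T x⟫ := by
    intro t
    have hnonneg := hT.inner_nonneg_right (x + t • y)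
    simp only [map_add, map_smul, inner_add_left, inner_add_right, real_inner_smul_left,
      real_inner_smul_right, hyx] at hnonneg
    linarith
  have hdiscrim := discrim_le_zero hquad
  rw [discrim] at hdiscrim
  linarith

theorem IsPositive.norm_map_sq_le {Λ : ℝ} (hT : T.IsPositive)
    (hΛ : ∀ v, ⟪v, T v⟫ ≤ Λ * ‖v‖ ^ 2) (x : E) :
    ‖T x‖ ^ 2 ≤ Λ * ⟪x, T x⟫ := by
  rcases eq_or_ne (T x) 0 with hx | hx
  · simp [hx]
  have hpos : 0 < ‖T x‖ ^ 2 := by positivity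
  have hcs : (‖T x‖ ^ 2) ^ 2 ≤ ⟪T x, T (T x)⟫ * ⟪x, T x⟫ := by
    rw [← real_inner_self_eq_norm_sq]
    exact hT.inner_map_sq_le (T x) x
  have hle : ⟪T x, T (T x)⟫ * ⟪x, T x⟫ ≤ Λ * ‖T x‖ ^ 2 * ⟪x, T x⟫ :=
    mul_le_mul_of_nonneg_right (hΛ (T x)) (hT.inner_nonneg_right x)
  nlinarith

theorem IsPositive.norm_map_le {Λ : ℝ} (hT : T.IsPositive) (hΛ₀ : 0 ≤ Λ)
    (hΛ : ∀ v, ⟪v, T v⟫ ≤ Λ * ‖v‖ ^ 2) (x : E) :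
    ‖T x‖ ≤ Λ * ‖x‖ := by
  have hsq : ‖T x‖ ^ 2 ≤ (Λ * ‖x‖) ^ 2 :=
    calc ‖T x‖ ^ 2 ≤ Λ * ⟪x, T x⟫ := hT.norm_map_sq_le hΛ x
      _ ≤ Λ * (Λ * ‖x‖ ^ 2) := mul_le_mul_of_nonneg_left (hΛ x) hΛ₀
      _ = (Λ * ‖x‖) ^ 2 := by ring
  exact (pow_le_pow_iff_left₀ (norm_nonneg _) (by positivity) two_ne_zero).mp hsq

end ContinuousLinearMap

theorem mul_norm_le_of_mul_norm_sq_le_neg_inner {E : Type*} [NormedAddCommGroup E]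
    [InnerProductSpace ℝ E] {c : ℝ} {g s : E} (h : c * ‖s‖ ^ 2 ≤ -⟪g, s⟫) : c * ‖s‖ ≤ ‖g‖ := by
  rcases eq_or_ne s 0 with rfl | hs
  · simp
  have hs : 0 < ‖s‖ := norm_pos_iff.mpr hs
  have hcs : -⟪g, s⟫ ≤ ‖g‖ * ‖s‖ := (neg_le_abs _).trans (abs_real_inner_le_norm g s)
  nlinarith

theorem one_sub_mul_norm_le_of_norm_add_le {E : Type*} [SeminormedAddCommGroup E] {η : ℝ}
    {a b : E} (h : ‖a + b‖ ≤ η * ‖b‖) : (1 - η) * ‖b‖ ≤ ‖a‖ := by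
  have htri := norm_sub_le (a + b) a
  rw [add_sub_cancel_left] at htri
  linarith

theorem stmt_3_general {n : ℕ} (H : EuclideanSpace ℝ (Fin n) →L[ℝ] EuclideanSpace ℝ (Fin n))
    (g s : EuclideanSpace ℝ (Fin n)) (lam1 lamn eta etabar : ℝ)
    (hlam1 : 0 < lam1) (hlamn : lam1 ≤ lamn)
    (hsym : ∀ u v, ⟪H u, v⟫ = ⟪u, H v⟫)
    (hspec : ∀ v, lam1 * ‖v‖ ^ 2 ≤ ⟪v, H v⟫ ∧ ⟪v, H v⟫ ≤ lamn * ‖v‖ ^ 2)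
    (hcg : ⟪s, H s⟫ = -⟪s, g⟫)
    (hres : ‖H s + g‖ ≤ eta * ‖g‖)
    (hetabar : eta < etabar) :
    (1 - etabar) / lamn * ‖g‖ ≤ ‖s‖ ∧ ‖s‖ ≤ 1 / lam1 * ‖g‖ ∧
      -⟪g, s⟫ ≥ lam1 * ‖s‖ ^ 2 := by
  have hlamn₀ : 0 < lamn := hlam1.trans_le hlamn
  have hH : H.IsPositive := (H.isPositive_iff).mpr ⟨hsym, fun v => by
    rw [real_inner_comm]; nlinarith [(hspec v).1, sq_nonneg ‖v‖]⟩
  have hdescent : lam1 * ‖s‖ ^ 2 ≤ -⟪g, s⟫ := by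
    rw [real_inner_comm, ← hcg]; exact (hspec s).1
  have hHs : (1 - etabar) * ‖g‖ ≤ lamn * ‖s‖ :=
    calc (1 - etabar) * ‖g‖ ≤ (1 - eta) * ‖g‖ := by gcongr
      _ ≤ ‖H s‖ := one_sub_mul_norm_le_of_norm_add_le hres
      _ ≤ lamn * ‖s‖ := hH.norm_map_le hlamn₀.le (fun v => (hspec v).2) s
  refine ⟨?_, ?_, hdescent⟩
  · rw [div_mul_eq_mul_div, div_le_iff₀ hlamn₀]; linarith
  · rw [one_div_mul_eq_div, le_div_iff₀ hlam1, mul_comm]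
    exact mul_norm_le_of_mul_norm_sq_le_neg_inner hdescent

/-- Bounds on an inexact Newton (CG) step. -/
theorem stmt_3 {n : ℕ} (H : EuclideanSpace ℝ (Fin n) →L[ℝ] EuclideanSpace ℝ (Fin n))
    (g s : EuclideanSpace ℝ (Fin n)) (lam1 lamn eta etabar : ℝ)
    (hlam1 : 0 < lam1) (hlamn : lam1 ≤ lamn)
    (hsym : ∀ u v, ⟪H u, v⟫ = ⟪u, H v⟫)
    (hspec : ∀ v, lam1 * ‖v‖ ^ 2 ≤ ⟪v, H v⟫ ∧ ⟪v, H v⟫ ≤ lamn * ‖v‖ ^ 2)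
    (hcg : ⟪s, H s⟫ = -⟪s, g⟫)
    (hres : ‖H s + g‖ ≤ eta * ‖g‖)
    (heta : 0 < eta) (hetabar : eta < etabar) (hbar1 : etabar < 1) :
    (1 - etabar) / lamn * ‖g‖ ≤ ‖s‖ ∧ ‖s‖ ≤ 1 / lam1 * ‖g‖ ∧
      -⟪g, s⟫ ≥ lam1 * ‖s‖ ^ 2 :=
  stmt_3_general H g s lam1 lamn eta etabar hlam1 hlamn hsym hspec hcg hres hetabar
end

section
/- Suppose H is symmetric positive definite with λ₁ I ⪯ H ⪯ λₙ I (0 < λ₁ ≤ λₙ), and s ≠ 0 satisfies sᵀHs = −sᵀg and ‖Hs + g‖ ≤ η̄‖g‖ with η̄ ∈ (0,1). Then with κ₁ = (1−η̄)/λₙ and β = λ₁: βκ₁ ≤ |gᵀs|/(‖g‖‖s‖) ≤ 1 and −gᵀs ≥ βκ₁²‖g‖². -/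
/-!
The curvature condition `⟪s, H s⟫ = -⟪s, g⟫` turns the lower spectral bound into the descent
estimate `-⟪g, s⟫ ≥ λ₁ ‖s‖²`. The residual condition gives `(1 - η̄) ‖g‖ ≤ ‖H s‖`, and since `H`
is symmetric its operator norm is its numerical radius, at most `λₙ`; hence `κ₁ ‖g‖ ≤ ‖s‖`.
Substituting this into the descent estimate gives both lower bounds; the upper bound `1` is
Cauchy–Schwarz.
-/

open scoped RealInnerProductSpace

theorem ContinuousLinearMap.opNorm_le_of_abs_re_inner_le {𝕜 E : Type*} [RCLike 𝕜]
    [NormedAddCommGroup E] [InnerProductSpace 𝕜 E] {T : E →L[𝕜] E} (hT : T.IsSymmetric)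
    {c : ℝ} (hc : 0 ≤ c) (h : ∀ x, |RCLike.re (inner 𝕜 (T x) x)| ≤ c * ‖x‖ ^ 2) : ‖T‖ ≤ c := by
  rw [T.norm_eq_iSup_rayleighQuotient hT]
  refine ciSup_le fun x ↦ ?_
  rcases eq_or_ne x 0 with rfl | hx
  · simpa using hc
  · rw [rayleighQuotient, reApplyInnerSelf_apply, abs_div, abs_sq,
      div_le_iff₀ (by positivity)]
    exact h x

theorem sub_mul_norm_le_norm_of_norm_add_le {E : Type*} [SeminormedAddCommGroup E] {u g : E}
    {η : ℝ} (h : ‖u + g‖ ≤ η * ‖g‖) : (1 - η) * ‖g‖ ≤ ‖u‖ := by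
  linarith [norm_le_add_norm_add' u g]

theorem stmt_4_general {n : ℕ} (H : EuclideanSpace ℝ (Fin n) →L[ℝ] EuclideanSpace ℝ (Fin n))
    (g s : EuclideanSpace ℝ (Fin n)) (lam1 lamn etabar : ℝ)
    (hlam1 : 0 < lam1) (hlamn : lam1 ≤ lamn)
    (hsym : ∀ u v, ⟪H u, v⟫ = ⟪u, H v⟫)
    (hspec : ∀ v, lam1 * ‖v‖ ^ 2 ≤ ⟪v, H v⟫ ∧ ⟪v, H v⟫ ≤ lamn * ‖v‖ ^ 2)
    (hg : g ≠ 0)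
    (hcg : ⟪s, H s⟫ = -⟪s, g⟫)
    (hres : ‖H s + g‖ ≤ etabar * ‖g‖)
    (hbar1 : etabar < 1) :
    lam1 * ((1 - etabar) / lamn) ≤ |⟪g, s⟫| / (‖g‖ * ‖s‖) ∧
      |⟪g, s⟫| / (‖g‖ * ‖s‖) ≤ 1 ∧
      -⟪g, s⟫ ≥ lam1 * ((1 - etabar) / lamn) ^ 2 * ‖g‖ ^ 2 := by
  have hlamn0 : 0 < lamn := hlam1.trans_le hlamn
  have hnorm : ‖H‖ ≤ lamn := H.opNorm_le_of_abs_re_inner_le hsym hlamn0.le fun x ↦ by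
    have ⟨hlo, hhi⟩ := hspec x
    rw [RCLike.re_to_real, real_inner_comm, abs_of_nonneg ((by positivity : 0 ≤ lam1 * ‖x‖ ^ 2).trans hlo)]
    exact hhi
  have hstep : (1 - etabar) / lamn * ‖g‖ ≤ ‖s‖ := by
    rw [div_mul_eq_mul_div, div_le_iff₀ hlamn0, mul_comm ‖s‖]
    exact (sub_mul_norm_le_norm_of_norm_add_le hres).trans (H.le_of_opNorm_le hnorm s)
  have hdescent : lam1 * ‖s‖ ^ 2 ≤ -⟪g, s⟫ := by
    rw [real_inner_comm, ← hcg]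
    exact (hspec s).1
  have hκg : 0 < (1 - etabar) / lamn * ‖g‖ :=
    mul_pos (div_pos (sub_pos.mpr hbar1) hlamn0) (norm_pos_iff.mpr hg)
  have hs_pos : 0 < ‖s‖ := hκg.trans_le hstep
  have hgs : 0 < ‖g‖ * ‖s‖ := mul_pos (norm_pos_iff.mpr hg) hs_pos
  have habs : |⟪g, s⟫| = -⟪g, s⟫ :=
    abs_of_neg (neg_pos.mp ((by positivity : 0 < lam1 * ‖s‖ ^ 2).trans_le hdescent))
  refine ⟨?_, div_le_one_of_le₀ (abs_real_inner_le_norm g s) hgs.le, ?_⟩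
  · rw [le_div_iff₀ hgs, habs]
    calc lam1 * ((1 - etabar) / lamn) * (‖g‖ * ‖s‖)
        = lam1 * ((1 - etabar) / lamn * ‖g‖) * ‖s‖ := by ring
      _ ≤ lam1 * ‖s‖ * ‖s‖ := by gcongr
      _ = lam1 * ‖s‖ ^ 2 := by ring
      _ ≤ -⟪g, s⟫ := hdescent
  · calc lam1 * ((1 - etabar) / lamn) ^ 2 * ‖g‖ ^ 2
        = lam1 * ((1 - etabar) / lamn * ‖g‖) ^ 2 := by ring
      _ ≤ lam1 * ‖s‖ ^ 2 := by gcongr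
      _ ≤ -⟪g, s⟫ := hdescent

/-- Angle and decrease bounds for the inexact Newton/CG step. -/
theorem stmt_4 {n : ℕ} (H : EuclideanSpace ℝ (Fin n) →L[ℝ] EuclideanSpace ℝ (Fin n))
    (g s : EuclideanSpace ℝ (Fin n)) (lam1 lamn etabar : ℝ)
    (hlam1 : 0 < lam1) (hlamn : lam1 ≤ lamn)
    (hsym : ∀ u v, ⟪H u, v⟫ = ⟪u, H v⟫)
    (hspec : ∀ v, lam1 * ‖v‖ ^ 2 ≤ ⟪v, H v⟫ ∧ ⟪v, H v⟫ ≤ lamn * ‖v‖ ^ 2)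
    (hs : s ≠ 0) (hg : g ≠ 0)
    (hcg : ⟪s, H s⟫ = -⟪s, g⟫)
    (hres : ‖H s + g‖ ≤ etabar * ‖g‖)
    (hetabar : 0 < etabar) (hbar1 : etabar < 1) :
    lam1 * ((1 - etabar) / lamn) ≤ |⟪g, s⟫| / (‖g‖ * ‖s‖) ∧
      |⟪g, s⟫| / (‖g‖ * ‖s‖) ≤ 1 ∧
      -⟪g, s⟫ ≥ lam1 * ((1 - etabar) / lamn) ^ 2 * ‖g‖ ^ 2 :=
  stmt_4_general H g s lam1 lamn etabar hlam1 hlamn hsym hspec hg hcg hres hbar1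
end

section
/- (Sufficient decrease under bounded noise.) Let f be C² with λ₁ I ⪯ ∇²f(x) ⪯ λₙ I, and let f̃ satisfy |f(x) − f̃(x)| ≤ ε_f for all x. Let g ∈ R^n with ‖∇f(x) − g‖ ≤ t η ‖g‖ where η ∈ (0,1), and let s satisfy κ₁‖g‖ ≤ ‖s‖, −gᵀs ≥ β‖s‖² with β, κ₁ > 0. Then for c ∈ (0,1), if t ≤ t̄ := 2βκ₁(1−c)/(κ₁λₙ + 2), the noisy Armijo condition f̃(x + t s) ≤ f̃(x) + c t sᵀg + 2ε_f holds. -/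
open scoped RealInnerProductSpace
open InnerProductSpace

variable {n : ℕ}

lemma fderiv_eq_inner_gradient (f : EuclideanSpace ℝ (Fin n) → ℝ) (y u : EuclideanSpace ℝ (Fin n)) :
    fderiv ℝ f y u = ⟪gradient f y, u⟫ := by
  have : fderiv ℝ f y = toDual ℝ _ (gradient f y) := by
    rw [gradient, LinearIsometryEquiv.apply_symm_apply]
  rw [this, toDual_apply_apply]

lemma grad_diff (f : EuclideanSpace ℝ (Fin n) → ℝ) (hf : ContDiff ℝ 2 f) :
    Differentiable ℝ (gradient f) := by
  have h1 : ContDiff ℝ 1 (fderiv ℝ f) := hf.fderiv_right (by norm_num)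
  have : gradient f = fun y => (toDual ℝ (EuclideanSpace ℝ (Fin n))).symm (fderiv ℝ f y) := rfl
  rw [this]
  exact (LinearIsometryEquiv.differentiable _).comp (h1.differentiable (by norm_num))

lemma taylor_ub (f : EuclideanSpace ℝ (Fin n) → ℝ) (lamn : ℝ) (hf : ContDiff ℝ 2 f)
    (hH : ∀ y v, ⟪v, fderiv ℝ (gradient f) y v⟫ ≤ lamn * ‖v‖ ^ 2)
    (x u : EuclideanSpace ℝ (Fin n)) :
    f (x + u) ≤ f x + ⟪gradient f x, u⟫ + lamn / 2 * ‖u‖ ^ 2 := by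
  have hfd : Differentiable ℝ f := hf.differentiable (by norm_num)
  have hgd : Differentiable ℝ (gradient f) := grad_diff f hf
  have hcurve : ∀ σ : ℝ, HasDerivAt (fun σ : ℝ => x + σ • u) u σ := by
    intro σ
    simpa using ((hasDerivAt_id σ).smul_const u).const_add x
  set G : ℝ → ℝ := fun σ => ⟪gradient f (x + σ • u), u⟫ with hG
  have hGderiv : ∀ σ : ℝ, HasDerivAt G ⟪fderiv ℝ (gradient f) (x + σ • u) u, u⟫ σ := by
    intro σ
    have h1 : HasDerivAt (fun σ : ℝ => gradient f (x + σ • u))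
        (fderiv ℝ (gradient f) (x + σ • u) u) σ :=
      ((hgd _).hasFDerivAt.comp_hasDerivAt σ (hcurve σ))
    exact ((innerSL ℝ).flip u).hasFDerivAt.comp_hasDerivAt σ h1
  have hGle : ∀ σ : ℝ, 0 ≤ σ → G σ ≤ G 0 + lamn * ‖u‖ ^ 2 * σ := by
    intro σ hσ
    set χ : ℝ → ℝ := fun σ => lamn * ‖u‖ ^ 2 * σ - G σ with hχ
    have hχd : ∀ τ : ℝ, HasDerivAt χ (lamn * ‖u‖ ^ 2 - ⟪fderiv ℝ (gradient f) (x + τ • u) u, u⟫) τ := by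
      intro τ
      have := ((hasDerivAt_id τ).const_mul (lamn * ‖u‖ ^ 2)).sub (hGderiv τ)
      simp only [mul_one] at this
      exact this
    have hmono : Monotone χ := by
      apply monotone_of_deriv_nonneg
      · exact fun τ => (hχd τ).differentiableAt
      · intro τ
        rw [(hχd τ).deriv]
        have := hH (x + τ • u) u
        rw [real_inner_comm] at this
        linarith
    have := hmono hσ
    simp only [hχ, mul_zero] at this
    simp only [hG] at this ⊢
    linarith
  set ψ : ℝ → ℝ := fun τ => f (x + τ • u) - τ * G 0 - lamn * ‖u‖ ^ 2 / 2 * τ ^ 2 with hψ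
  have hψd : ∀ τ : ℝ, HasDerivAt ψ (G τ - G 0 - lamn * ‖u‖ ^ 2 * τ) τ := by
    intro τ
    have h1 : HasDerivAt (fun τ : ℝ => f (x + τ • u)) (fderiv ℝ f (x + τ • u) u) τ :=
      (hfd _).hasFDerivAt.comp_hasDerivAt τ (hcurve τ)
    rw [fderiv_eq_inner_gradient] at h1
    have h2 : HasDerivAt (fun τ : ℝ => τ * G 0) (G 0) τ := by
      simpa using (hasDerivAt_id τ).mul_const (G 0)
    have h3 : HasDerivAt (fun τ : ℝ => lamn * ‖u‖ ^ 2 / 2 * τ ^ 2) (lamn * ‖u‖ ^ 2 * τ) τ := by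
      have := (hasDerivAt_pow 2 τ).const_mul (lamn * ‖u‖ ^ 2 / 2)
      exact this.congr_deriv (by rw [show (2:ℕ) - 1 = 1 from rfl]; push_cast; ring)
    have := (h1.sub h2).sub h3
    exact this
  have hanti : AntitoneOn ψ (Set.Ici 0) := by
    apply antitoneOn_of_deriv_nonpos (convex_Ici 0)
    · exact (Differentiable.continuous (fun τ => (hψd τ).differentiableAt)).continuousOn
    · exact fun τ _ => ((hψd τ).differentiableAt).differentiableWithinAt
    · intro τ hτ
      rw [interior_Ici] at hτ
      rw [(hψd τ).deriv]
      have := hGle τ (le_of_lt hτ)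
      linarith
  have h01 : ψ 1 ≤ ψ 0 := hanti (Set.self_mem_Ici) (by norm_num) zero_le_one
  simp only [hψ, one_smul, zero_smul, add_zero, one_mul, one_pow, zero_pow, mul_zero, zero_mul] at h01
  simp only [hG, zero_smul, add_zero] at h01
  linarith

/-- Sufficient decrease (noisy Armijo) under bounded noise. -/
theorem stmt_6 {n : ℕ} (f ftil : EuclideanSpace ℝ (Fin n) → ℝ)
    (lam1 lamn epsf beta kappa1 c eta t : ℝ)
    (x s g : EuclideanSpace ℝ (Fin n))
    (hlam1 : 0 < lam1) (hlamn : lam1 ≤ lamn)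
    (hf : ContDiff ℝ 2 f)
    (hHess : ∀ y v, lam1 * ‖v‖ ^ 2 ≤ ⟪v, fderiv ℝ (gradient f) y v⟫ ∧
      ⟪v, fderiv ℝ (gradient f) y v⟫ ≤ lamn * ‖v‖ ^ 2)
    (hnoise : ∀ y, |f y - ftil y| ≤ epsf)
    (heta : 0 < eta) (heta1 : eta < 1)
    (hacc : ‖gradient f x - g‖ ≤ t * eta * ‖g‖)
    (hbeta : 0 < beta) (hkappa1 : 0 < kappa1)
    (hs1 : kappa1 * ‖g‖ ≤ ‖s‖) (hs2 : -⟪g, s⟫ ≥ beta * ‖s‖ ^ 2)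
    (hc : 0 < c) (hc1 : c < 1)
    (ht0 : 0 ≤ t)
    (ht : t ≤ 2 * beta * kappa1 * (1 - c) / (kappa1 * lamn + 2)) :
    ftil (x + t • s) ≤ ftil x + c * t * ⟪s, g⟫ + 2 * epsf := by
  have hT := taylor_ub f lamn hf (fun y v => (hHess y v).2) x (t • s)
  have hns : ‖t • s‖ = t * ‖s‖ := by
    rw [norm_smul, Real.norm_eq_abs, abs_of_nonneg ht0]
  rw [hns, real_inner_smul_right] at hT
  -- gradient inner product bound
  have hsplit : ⟪gradient f x, s⟫ = ⟪g, s⟫ + ⟪gradient f x - g, s⟫ := by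
    rw [inner_sub_left]; ring
  have hCS : ⟪gradient f x - g, s⟫ ≤ t * eta * ‖g‖ * ‖s‖ := by
    calc ⟪gradient f x - g, s⟫ ≤ ‖gradient f x - g‖ * ‖s‖ := real_inner_le_norm _ _
    _ ≤ t * eta * ‖g‖ * ‖s‖ := by
        apply mul_le_mul_of_nonneg_right hacc (norm_nonneg s)
  have hn1 : ftil (x + t • s) ≤ f (x + t • s) + epsf := by
    have := hnoise (x + t • s); rw [abs_le] at this; linarith
  have hn2 : f x ≤ ftil x + epsf := by
    have := hnoise x; rw [abs_le] at this; linarith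
  have hgs : ⟪s, g⟫ = ⟪g, s⟫ := real_inner_comm _ _
  rw [hgs]
  -- key scalar inequality
  have hden : (0:ℝ) < kappa1 * lamn + 2 := by nlinarith
  have ht' : t * (kappa1 * lamn + 2) ≤ 2 * beta * kappa1 * (1 - c) := by
    rw [le_div_iff₀ hden] at ht
    exact ht
  have h1 : (1 - c) * t * (-⟪g, s⟫ - beta * ‖s‖ ^ 2) ≥ 0 :=
    mul_nonneg (mul_nonneg (by linarith) ht0) (by linarith)
  have h2 : t ^ 2 * (‖g‖ * ‖s‖) * (1 - eta) ≥ 0 :=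
    mul_nonneg (mul_nonneg (sq_nonneg t) (mul_nonneg (norm_nonneg g) (norm_nonneg s))) (by linarith)
  have h3 : t ^ 2 * ‖s‖ * (‖s‖ - kappa1 * ‖g‖) ≥ 0 :=
    mul_nonneg (mul_nonneg (sq_nonneg t) (norm_nonneg s)) (by linarith)
  have h4 : t * ‖s‖ ^ 2 * (2 * beta * kappa1 * (1 - c) - t * (kappa1 * lamn + 2)) ≥ 0 :=
    mul_nonneg (mul_nonneg ht0 (sq_nonneg ‖s‖)) (by linarith)
  have hCSt : t * ⟪gradient f x - g, s⟫ ≤ t * (t * eta * ‖g‖ * ‖s‖) :=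
    mul_le_mul_of_nonneg_left hCS ht0
  have hkey : t * ⟪gradient f x, s⟫ + lamn / 2 * (t * ‖s‖) ^ 2 ≤ c * t * ⟪g, s⟫ := by
    rw [hsplit]
    nlinarith [h1, h2, h3, h4, hCSt, hkappa1]
  linarith
end

section
/- (Sufficient decrease with controllable noise.) Let f be C² with λ₁ I ⪯ ∇²f(x) ⪯ λₙ I. Let c ∈ (0,1), θ < c/2, θ > 0, and suppose |f(x) − f̃(x)| ≤ −θ t sᵀg and |f(x+ts) − f̃(x+ts)| ≤ −θ t sᵀg. Assume ‖∇f(x) − g‖ ≤ t η ‖g‖ with η ∈ (0,1), ‖s‖ ≥ κ₁‖g‖ and −gᵀs ≥ β‖s‖² with β, κ₁ > 0. Then if t ≤ t̄ := (2κ₁β/(κ₁λₙ + 2))(1 − c − 2θ), the condition f̃(x + t s) ≤ f̃(x) + c t sᵀg holds. -/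
open scoped RealInnerProductSpace

/-- Descent lemma along a ray, from a Hessian upper bound in direction `s`. -/
theorem descent_aux {n : ℕ} (f : EuclideanSpace ℝ (Fin n) → ℝ) (lamn : ℝ)
    (x s : EuclideanSpace ℝ (Fin n)) (hf : ContDiff ℝ 2 f)
    (hH : ∀ y, ⟪s, fderiv ℝ (gradient f) y s⟫ ≤ lamn * ‖s‖ ^ 2)
    {t : ℝ} (ht : 0 ≤ t) :
    f (x + t • s) ≤ f x + t * ⟪gradient f x, s⟫ + lamn * ‖s‖ ^ 2 * t ^ 2 / 2 := by
  have hfd : Differentiable ℝ f := hf.differentiable (by norm_num)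
  have h1 : ContDiff ℝ 1 (fderiv ℝ f) := hf.fderiv_right (by norm_num)
  have hG : Differentiable ℝ (gradient f) := by
    have : Differentiable ℝ (fun y => (InnerProductSpace.toDual ℝ (EuclideanSpace ℝ (Fin n))).symm (fderiv ℝ f y)) :=
      (InnerProductSpace.toDual ℝ (EuclideanSpace ℝ (Fin n))).symm.toContinuousLinearEquiv.toContinuousLinearMap.differentiable.comp
        (h1.differentiable one_ne_zero)
    exact this
  set L := lamn * ‖s‖ ^ 2 with hL
  set cc : ℝ → EuclideanSpace ℝ (Fin n) := fun τ => x + τ • s with hcc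
  have hccd : ∀ τ : ℝ, HasDerivAt cc s τ := by
    intro τ
    have : HasDerivAt (fun τ : ℝ => τ • s) ((1:ℝ) • s) τ := (hasDerivAt_id τ).smul_const s
    simpa [cc] using this.const_add x
  set ψ : ℝ → ℝ := fun τ => ⟪gradient f (cc τ), s⟫ with hψ
  have hψd : ∀ τ : ℝ, HasDerivAt ψ (⟪fderiv ℝ (gradient f) (cc τ) s, s⟫) τ := by
    intro τ
    have h2 : HasDerivAt (fun τ => gradient f (cc τ)) (fderiv ℝ (gradient f) (cc τ) s) τ :=
      ((hG (cc τ)).hasFDerivAt).comp_hasDerivAt τ (hccd τ)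
    have := (h2.inner ℝ (hasDerivAt_const τ s))
    simpa [ψ] using this
  set φ : ℝ → ℝ := fun τ => f (cc τ) with hφ
  have hφd : ∀ τ : ℝ, HasDerivAt φ (ψ τ) τ := by
    intro τ
    have hg : HasGradientAt f (gradient f (cc τ)) (cc τ) := (hfd (cc τ)).hasGradientAt
    have h3 : HasFDerivAt f (InnerProductSpace.toDual ℝ (EuclideanSpace ℝ (Fin n)) (gradient f (cc τ))) (cc τ) := hg
    have h4 := h3.comp_hasDerivAt τ (hccd τ)
    simpa [ψ, φ, Function.comp_def, InnerProductSpace.toDual_apply_apply] using h4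
  -- step A: ψ τ ≤ ψ 0 + L τ for τ ≥ 0
  have stepA : ∀ τ : ℝ, 0 ≤ τ → ψ τ ≤ ψ 0 + L * τ := by
    intro τ hτ
    have hu : ∀ σ : ℝ, HasDerivAt (fun σ => ψ σ - L * σ)
        (⟪fderiv ℝ (gradient f) (cc σ) s, s⟫ - L) σ := by
      intro σ
      have := (hψd σ).sub ((hasDerivAt_id σ).const_mul L); simp only [mul_one] at this; exact this
    have hanti : Antitone (fun σ => ψ σ - L * σ) := by
      apply antitone_of_deriv_nonpos (fun σ => (hu σ).differentiableAt)
      intro σ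
      rw [(hu σ).deriv]
      have := hH (cc σ)
      rw [real_inner_comm] at this
      linarith
    have := hanti hτ
    simp only at this
    linarith
  -- step B
  have hv : ∀ σ : ℝ, HasDerivAt (fun σ => φ σ - ψ 0 * σ - L * σ ^ 2 / 2)
      (ψ σ - ψ 0 - L * σ) σ := by
    intro σ
    have h5 : HasDerivAt (fun σ : ℝ => L * σ ^ 2 / 2) (L * σ) σ := by
      have : HasDerivAt (fun σ : ℝ => σ ^ 2) (2 * σ) σ := by
        simpa using (hasDerivAt_pow 2 σ)
      have := (this.const_mul L).div_const 2
      rw [show L * σ = L * (2 * σ) / 2 by ring]; exact this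
    have := ((hφd σ).sub ((hasDerivAt_id σ).const_mul (ψ 0))).sub h5; simp only [mul_one] at this; exact this
  have hantiB : AntitoneOn (fun σ => φ σ - ψ 0 * σ - L * σ ^ 2 / 2) (Set.Ici (0:ℝ)) := by
    apply antitoneOn_of_deriv_nonpos (convex_Ici 0)
    · exact (Differentiable.continuous (fun σ => (hv σ).differentiableAt)).continuousOn
    · exact fun σ _ => (hv σ).differentiableAt.differentiableWithinAt
    · intro σ hσ
      rw [interior_Ici] at hσ
      rw [(hv σ).deriv]
      have := stepA σ (le_of_lt hσ)
      linarith
  have hB := hantiB (Set.self_mem_Ici) (Set.mem_Ici.mpr ht) ht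
  simp only at hB
  have hc0 : cc 0 = x := by simp [cc]
  have hct : cc t = x + t • s := rfl
  have hψ0 : ψ 0 = ⟪gradient f x, s⟫ := by rw [hψ]; simp [hc0]
  have : φ t - ψ 0 * t - L * t ^ 2 / 2 ≤ φ 0 - ψ 0 * 0 - L * 0 ^ 2 / 2 := hB
  simp only [φ, hc0, hct] at this
  rw [hψ0] at this
  rw [hL] at this ⊢
  linarith

set_option maxHeartbeats 1000000 in
/-- Sufficient decrease with controllable noise. -/
theorem stmt_8 {n : ℕ} (f ftil : EuclideanSpace ℝ (Fin n) → ℝ)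
    (lam1 lamn theta beta kappa1 c eta t : ℝ)
    (x s g : EuclideanSpace ℝ (Fin n))
    (hlam1 : 0 < lam1) (hlamn : lam1 ≤ lamn)
    (hf : ContDiff ℝ 2 f)
    (hHess : ∀ y v, lam1 * ‖v‖ ^ 2 ≤ ⟪v, fderiv ℝ (gradient f) y v⟫ ∧
      ⟪v, fderiv ℝ (gradient f) y v⟫ ≤ lamn * ‖v‖ ^ 2)
    (hc : 0 < c) (hc1 : c < 1) (htheta0 : 0 < theta) (htheta : theta < c / 2)
    (hnoise1 : |f x - ftil x| ≤ -(theta * t * ⟪s, g⟫))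
    (hnoise2 : |f (x + t • s) - ftil (x + t • s)| ≤ -(theta * t * ⟪s, g⟫))
    (heta : 0 < eta) (heta1 : eta < 1)
    (hacc : ‖gradient f x - g‖ ≤ t * eta * ‖g‖)
    (hbeta : 0 < beta) (hkappa1 : 0 < kappa1)
    (hs1 : kappa1 * ‖g‖ ≤ ‖s‖) (hs2 : -⟪g, s⟫ ≥ beta * ‖s‖ ^ 2)
    (ht0 : 0 ≤ t)
    (ht : t ≤ 2 * kappa1 * beta / (kappa1 * lamn + 2) * (1 - c - 2 * theta)) :
    ftil (x + t • s) ≤ ftil x + c * t * ⟪s, g⟫ := by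
  have hH : ∀ y, ⟪s, fderiv ℝ (gradient f) y s⟫ ≤ lamn * ‖s‖ ^ 2 := fun y => (hHess y s).2
  have hdesc := descent_aux f lamn x s hf hH ht0
  have hgs : ⟪s, g⟫ = ⟪g, s⟫ := real_inner_comm g s
  rw [hgs] at hnoise1 hnoise2 ⊢
  have hn1 := abs_le.mp hnoise1
  have hn2 := abs_le.mp hnoise2
  -- gradient accuracy
  have hge : ⟪gradient f x, s⟫ ≤ ⟪g, s⟫ + t * eta * ‖g‖ * ‖s‖ := by
    have h1 : ⟪gradient f x - g, s⟫ ≤ ‖gradient f x - g‖ * ‖s‖ := real_inner_le_norm _ _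
    have h2 : ‖gradient f x - g‖ * ‖s‖ ≤ t * eta * ‖g‖ * ‖s‖ :=
      mul_le_mul_of_nonneg_right hacc (norm_nonneg s)
    have h3 : ⟪gradient f x - g, s⟫ = ⟪gradient f x, s⟫ - ⟪g, s⟫ := by
      rw [inner_sub_left]
    linarith
  have hge' := mul_le_mul_of_nonneg_left hge ht0
  have hlamn0 : 0 < lamn := lt_of_lt_of_le hlam1 hlamn
  have hpos : (0:ℝ) < kappa1 * lamn + 2 := by positivity
  have h1 : t * (kappa1 * lamn + 2) ≤ 2 * kappa1 * beta * (1 - c - 2 * theta) := by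
    rw [div_mul_eq_mul_div] at ht
    exact (le_div_iff₀ hpos).mp ht
  have hD : 0 ≤ 1 - c - 2 * theta := by
    have h2 : (0:ℝ) ≤ 2 * kappa1 * beta * (1 - c - 2 * theta) :=
      le_trans (mul_nonneg ht0 hpos.le) h1
    have h3 : (0:ℝ) < 2 * kappa1 * beta := by positivity
    nlinarith [h2]
  have key : t * (1 - c - 2 * theta) * ⟪g, s⟫ + t ^ 2 * eta * ‖g‖ * ‖s‖
      + lamn * ‖s‖ ^ 2 * t ^ 2 / 2 ≤ 0 := by
    have hA : ⟪g, s⟫ ≤ -(beta * ‖s‖ ^ 2) := by linarith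
    have f1 : (2 * kappa1) * (t * (1 - c - 2 * theta) * ⟪g, s⟫)
        ≤ (2 * kappa1) * (t * (1 - c - 2 * theta) * (-(beta * ‖s‖ ^ 2))) :=
      mul_le_mul_of_nonneg_left
        (mul_le_mul_of_nonneg_left hA (mul_nonneg ht0 hD))
        (by positivity)
    have f2 : (t * (‖s‖ * ‖s‖)) * (t * (kappa1 * lamn + 2))
        ≤ (t * (‖s‖ * ‖s‖)) * (2 * kappa1 * beta * (1 - c - 2 * theta)) :=
      mul_le_mul_of_nonneg_left h1
        (mul_nonneg ht0 (mul_nonneg (norm_nonneg s) (norm_nonneg s)))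
    have f5 : t ^ 2 * eta ≤ t ^ 2 := by nlinarith [sq_nonneg t]
    have f5s : (2 * kappa1 * (‖g‖ * ‖s‖)) * (t ^ 2 * eta)
        ≤ (2 * kappa1 * (‖g‖ * ‖s‖)) * t ^ 2 :=
      mul_le_mul_of_nonneg_left f5 (by positivity)
    have f3 : (2 * (t * t * ‖s‖)) * (kappa1 * ‖g‖) ≤ (2 * (t * t * ‖s‖)) * ‖s‖ :=
      mul_le_mul_of_nonneg_left hs1 (by positivity)
    have hb : (2 * kappa1) * (t * (1 - c - 2 * theta) * ⟪g, s⟫ + t ^ 2 * eta * ‖g‖ * ‖s‖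
        + lamn * ‖s‖ ^ 2 * t ^ 2 / 2) ≤ 0 := by
      have hss : ‖s‖ ^ 2 = ‖s‖ * ‖s‖ := sq ‖s‖
      rw [hss] at f1 ⊢
      linarith [f1, f2, f5s, f3]
    have hb' : (2 * kappa1) * (t * (1 - c - 2 * theta) * ⟪g, s⟫ + t ^ 2 * eta * ‖g‖ * ‖s‖
        + lamn * ‖s‖ ^ 2 * t ^ 2 / 2) ≤ (2 * kappa1) * 0 := by rw [mul_zero]; exact hb
    exact le_of_mul_le_mul_left hb' (by positivity)
  linarith [hdesc, hge', hn1.2, hn2.1, key]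
end

section
/- (Gap increase bound on false successful steps with bounded noise.) Suppose f̃(x+ts) ≤ f̃(x) + c t sᵀg + 2ε_f with c ∈ (0,1), t > 0, sᵀg ≤ 0, and |f(y) − f̃(y)| ≤ ε_f for all y. If moreover f(x) − f* > ε, then f(x+ts) − f* ≤ (1 + 4ε_f/ε)(f(x) − f*). -/
open scoped RealInnerProductSpace

theorem le_add_four_mul_of_noisy_le {α : Type*} {f ftil : α → ℝ} {epsf : ℝ} {x y : α}
    (hx : |f x - ftil x| ≤ epsf) (hy : |f y - ftil y| ≤ epsf)
    (hle : ftil y ≤ ftil x + 2 * epsf) :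
    f y ≤ f x + 4 * epsf := by
  linarith [(abs_le.mp hx).1, (abs_le.mp hy).2]

theorem le_one_add_div_mul_of_le_add {a b δ ε : ℝ} (hδ : 0 ≤ δ) (hε : 0 < ε) (hb : ε < b)
    (hab : a ≤ b + δ) :
    a ≤ (1 + δ / ε) * b := by
  have hδb : δ ≤ δ / ε * b :=
    calc δ = δ / ε * ε := (div_mul_cancel₀ δ hε.ne').symm
      _ ≤ δ / ε * b := mul_le_mul_of_nonneg_left hb.le (div_nonneg hδ hε.le)
  linarith

theorem stmt_12_general {n : ℕ} (f ftil : EuclideanSpace ℝ (Fin n) → ℝ)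
    (c epsf eps fstar t : ℝ) (x s g : EuclideanSpace ℝ (Fin n))
    (hc : 0 < c) (ht : 0 < t) (hsg : ⟪s, g⟫ ≤ 0)
    (heps : 0 < eps)
    (hnoise : ∀ y, |f y - ftil y| ≤ epsf)
    (harmijo : ftil (x + t • s) ≤ ftil x + c * t * ⟪s, g⟫ + 2 * epsf)
    (hgap : f x - fstar > eps) :
    f (x + t • s) - fstar ≤ (1 + 4 * epsf / eps) * (f x - fstar) := by
  have hepsf : 0 ≤ epsf := (abs_nonneg _).trans (hnoise x)
  have hdecrease : c * t * ⟪s, g⟫ ≤ 0 := mul_nonpos_of_nonneg_of_nonpos (mul_pos hc ht).le hsg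
  have hstep : f (x + t • s) ≤ f x + 4 * epsf :=
    le_add_four_mul_of_noisy_le (hnoise x) (hnoise _) (by linarith)
  exact le_one_add_div_mul_of_le_add (by positivity) heps hgap (by linarith)

/-- Gap increase bound on false successful steps with bounded noise. -/
theorem stmt_12 {n : ℕ} (f ftil : EuclideanSpace ℝ (Fin n) → ℝ)
    (c epsf eps fstar t : ℝ) (x s g : EuclideanSpace ℝ (Fin n))
    (hc : 0 < c) (hc1 : c < 1) (ht : 0 < t) (hsg : ⟪s, g⟫ ≤ 0)
    (heps : 0 < eps)
    (hnoise : ∀ y, |f y - ftil y| ≤ epsf)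
    (harmijo : ftil (x + t • s) ≤ ftil x + c * t * ⟪s, g⟫ + 2 * epsf)
    (hgap : f x - fstar > eps) :
    f (x + t • s) - fstar ≤ (1 + 4 * epsf / eps) * (f x - fstar) :=
  stmt_12_general f ftil c epsf eps fstar t x s g hc ht hsg heps hnoise harmijo hgap
end

section
/- (Gap contraction with bounded noise on true successful steps.) Let f be C² with λ₁ I ⪯ ∇²f ⪯ λₙ I, minimizer x*, f* = f(x*). Assume |f(y) − f̃(y)| ≤ ε_f for all y; f̃(x+ts) ≤ f̃(x) + c t sᵀg + 2ε_f with c ∈ (0,1); −gᵀs ≥ βκ₁²‖g‖²; ‖∇f(x)‖ ≤ (1+tη)‖g‖ with η ≤ 1, 0 < t ≤ t_max; and f(x) − f* > ε with 4ε_f < ε. Then f(x+ts) − f* ≤ (1 − cβκ₁²λ₁ t/(1+t_max)²)(1 + 4ε_f/ε)(f(x) − f*). -/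
open scoped RealInnerProductSpace

theorem strong_lb {n : ℕ} (f : EuclideanSpace ℝ (Fin n) → ℝ) (lam1 : ℝ)
    (hf : ContDiff ℝ 2 f)
    (hHess : ∀ y v, lam1 * ‖v‖ ^ 2 ≤ ⟪v, fderiv ℝ (gradient f) y v⟫)
    (x y : EuclideanSpace ℝ (Fin n)) :
    f x + ⟪gradient f x, y - x⟫ + lam1 / 2 * ‖y - x‖ ^ 2 ≤ f y := by
  set d : EuclideanSpace ℝ (Fin n) := y - x with hd
  set G : EuclideanSpace ℝ (Fin n) → EuclideanSpace ℝ (Fin n) := gradient f with hG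
  have hfd : Differentiable ℝ f := hf.differentiable (by norm_num)
  have hGc : ContDiff ℝ 1 G := by
    have h1 : ContDiff ℝ 1 (fderiv ℝ f) := hf.fderiv_right (by norm_num)
    exact ((InnerProductSpace.toDual ℝ _).symm.contDiff).comp h1
  have hGd : Differentiable ℝ G := hGc.differentiable (by norm_num)
  set L : ℝ → EuclideanSpace ℝ (Fin n) := fun τ => x + τ • d with hL
  have hLd : ∀ τ : ℝ, HasDerivAt L d τ := by
    intro τ
    simpa [hL] using ((hasDerivAt_id τ).smul_const d).const_add x
  have hginner : ∀ τ : ℝ, HasDerivAt (fun τ => ⟪G (L τ), d⟫)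
      (⟪(fderiv ℝ G (L τ)) d, d⟫) τ := by
    intro τ
    have h1 : HasDerivAt (fun τ => G (L τ)) ((fderiv ℝ G (L τ)) d) τ :=
      (hGd (L τ)).hasFDerivAt.comp_hasDerivAt τ (hLd τ)
    have h2 := h1.inner ℝ (hasDerivAt_const τ d)
    simpa using h2
  have hfL : ∀ τ : ℝ, HasDerivAt (fun τ => f (L τ)) (⟪G (L τ), d⟫) τ := by
    intro τ
    have h1 : HasFDerivAt f (InnerProductSpace.toDual ℝ _ (G (L τ))) (L τ) :=
      (hfd (L τ)).hasGradientAt.hasFDerivAt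
    have h2 := h1.comp_hasDerivAt τ (hLd τ)
    simp only [InnerProductSpace.toDual_apply_apply] at h2
    exact h2
  have hL0 : L 0 = x := by simp [hL]
  have hL1 : L 1 = y := by simp [hL, hd]
  set B : ℝ → ℝ := fun τ => ⟪G (L τ), d⟫ - lam1 * τ * ‖d‖ ^ 2 with hB
  have hBd : ∀ τ : ℝ, HasDerivAt B (⟪(fderiv ℝ G (L τ)) d, d⟫ - lam1 * ‖d‖ ^ 2) τ := by
    intro τ
    have h2 : HasDerivAt (fun τ : ℝ => lam1 * τ * ‖d‖ ^ 2) (lam1 * ‖d‖ ^ 2) τ := by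
      simpa [mul_comm, mul_assoc, mul_left_comm] using
        (((hasDerivAt_id τ).const_mul lam1).mul_const (‖d‖ ^ 2))
    exact (hginner τ).sub h2
  have hBmono : Monotone B := by
    apply monotone_of_deriv_nonneg
    · exact fun τ => (hBd τ).differentiableAt
    · intro τ
      rw [(hBd τ).deriv]
      have h1 := (hHess (L τ) d)
      have hsym : ⟪(fderiv ℝ G (L τ)) d, d⟫ = ⟪d, (fderiv ℝ G (L τ)) d⟫ :=
        real_inner_comm _ _
      rw [hsym]
      linarith
  have hBineq : ∀ τ : ℝ, 0 ≤ τ → ⟪G x, d⟫ + lam1 * τ * ‖d‖ ^ 2 ≤ ⟪G (L τ), d⟫ := by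
    intro τ hτ
    have h1 := hBmono hτ
    simp only [hB, hL0] at h1
    simp only [mul_zero, zero_mul, sub_zero] at h1
    linarith
  set A : ℝ → ℝ := fun τ => f (L τ) - τ * ⟪G x, d⟫ - lam1 / 2 * τ ^ 2 * ‖d‖ ^ 2 with hA
  have hAd : ∀ τ : ℝ, HasDerivAt A (⟪G (L τ), d⟫ - ⟪G x, d⟫ - lam1 * τ * ‖d‖ ^ 2) τ := by
    intro τ
    have h2 : HasDerivAt (fun τ : ℝ => τ * ⟪G x, d⟫) (⟪G x, d⟫) τ := by
      simpa using (hasDerivAt_id τ).mul_const (⟪G x, d⟫)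
    have h3 : HasDerivAt (fun τ : ℝ => lam1 / 2 * τ ^ 2 * ‖d‖ ^ 2) (lam1 * τ * ‖d‖ ^ 2) τ := by
      have := ((hasDerivAt_pow 2 τ).const_mul (lam1 / 2)).mul_const (‖d‖ ^ 2)
      refine this.congr_deriv ?_
      ring
    exact ((hfL τ).sub h2).sub h3
  have hAmono : MonotoneOn A (Set.Icc (0:ℝ) 1) := by
    apply monotoneOn_of_deriv_nonneg (convex_Icc 0 1)
    · exact fun τ _ => ((hAd τ).differentiableAt).continuousAt.continuousWithinAt
    · intro τ hτ
      exact (hAd τ).differentiableAt.differentiableWithinAt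
    · intro τ hτ
      rw [(hAd τ).deriv]
      rw [interior_Icc] at hτ
      linarith [hBineq τ (le_of_lt hτ.1)]
  have h01 : A 0 ≤ A 1 := hAmono (by norm_num) (by norm_num) (by norm_num)
  have e0 : A 0 = f x := by
    rw [show A 0 = f (L 0) - 0 * ⟪G x, d⟫ - lam1 / 2 * 0 ^ 2 * ‖d‖ ^ 2 from rfl, hL0]; ring
  have e1 : A 1 = f y - ⟪G x, d⟫ - lam1 / 2 * ‖d‖ ^ 2 := by
    rw [show A 1 = f (L 1) - 1 * ⟪G x, d⟫ - lam1 / 2 * 1 ^ 2 * ‖d‖ ^ 2 from rfl, hL1]; ring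
  rw [e0, e1] at h01
  linarith

set_option maxHeartbeats 1000000 in
/-- Gap contraction with bounded noise on true successful steps. -/
theorem stmt_13 {n : ℕ} (f ftil : EuclideanSpace ℝ (Fin n) → ℝ)
    (lam1 lamn c epsf eps beta kappa1 eta t tmax : ℝ)
    (x xstar s g : EuclideanSpace ℝ (Fin n))
    (hlam1 : 0 < lam1) (hlamn : lam1 ≤ lamn)
    (hf : ContDiff ℝ 2 f)
    (hHess : ∀ y v, lam1 * ‖v‖ ^ 2 ≤ ⟪v, fderiv ℝ (gradient f) y v⟫ ∧
      ⟪v, fderiv ℝ (gradient f) y v⟫ ≤ lamn * ‖v‖ ^ 2)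
    (hmin : ∀ y, f xstar ≤ f y)
    (hnoise : ∀ y, |f y - ftil y| ≤ epsf)
    (hc : 0 < c) (hc1 : c < 1)
    (harmijo : ftil (x + t • s) ≤ ftil x + c * t * ⟪s, g⟫ + 2 * epsf)
    (hbeta : 0 < beta) (hkappa1 : 0 < kappa1)
    (hs2 : -⟪g, s⟫ ≥ beta * kappa1 ^ 2 * ‖g‖ ^ 2)
    (hacc : ‖gradient f x‖ ≤ (1 + t * eta) * ‖g‖)
    (heta0 : 0 < eta) (heta : eta ≤ 1)
    (ht0 : 0 < t) (ht : t ≤ tmax)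
    (hgap : f x - f xstar > eps) (hepsf : 4 * epsf < eps) :
    f (x + t • s) - f xstar ≤
      (1 - c * beta * kappa1 ^ 2 * lam1 * t / (1 + tmax) ^ 2) *
        (1 + 4 * epsf / eps) * (f x - f xstar) := by
  have hepsf0 : 0 ≤ epsf := le_trans (abs_nonneg _) (hnoise x)
  have heps0 : 0 < eps := lt_of_le_of_lt (by linarith) hepsf
  have htmax0 : 0 < tmax := lt_of_lt_of_le ht0 ht
  have hP : (0:ℝ) < (1 + tmax) ^ 2 := by positivity
  -- true decrease from noisy Armijo
  have h1 : f (x + t • s) ≤ f x + c * t * ⟪s, g⟫ + 4 * epsf := by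
    have a1 := abs_le.mp (hnoise (x + t • s))
    have a2 := abs_le.mp (hnoise x)
    linarith [harmijo, a1.1, a1.2, a2.1, a2.2]
  have hsg : ⟪s, g⟫ ≤ -(beta * kappa1 ^ 2 * ‖g‖ ^ 2) := by
    rw [real_inner_comm]; linarith [hs2]
  -- PL inequality from strong convexity
  have hlb := strong_lb f lam1 hf (fun y v => (hHess y v).1) x xstar
  have hcs := abs_le.mp (abs_real_inner_le_norm (gradient f x) (xstar - x))
  have hpl : (f x - f xstar) * (2 * lam1) ≤ ‖gradient f x‖ ^ 2 := by
    nlinarith [sq_nonneg (‖gradient f x‖ - lam1 * ‖xstar - x‖), hcs.1, hlb, hlam1]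
  have hg2 : ‖gradient f x‖ ^ 2 ≤ (1 + tmax) ^ 2 * ‖g‖ ^ 2 := by
    have h1t : ‖gradient f x‖ ≤ (1 + tmax) * ‖g‖ := by
      refine le_trans hacc ?_
      have : t * eta ≤ tmax := by nlinarith
      nlinarith [norm_nonneg g]
    nlinarith [norm_nonneg (gradient f x), norm_nonneg g]
  set r : ℝ := c * beta * kappa1 ^ 2 * lam1 * t / (1 + tmax) ^ 2 with hr
  have hr0 : 0 < r := by rw [hr]; positivity
  have key : 2 * r * (f x - f xstar) ≤ c * t * (beta * kappa1 ^ 2 * ‖g‖ ^ 2) := by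
    rw [hr, show 2 * (c * beta * kappa1 ^ 2 * lam1 * t / (1 + tmax) ^ 2) * (f x - f xstar)
        = 2 * (c * beta * kappa1 ^ 2 * lam1 * t) * (f x - f xstar) / (1 + tmax) ^ 2 by ring,
      div_le_iff₀ hP]
    have hgap2 : (f x - f xstar) * (2 * lam1) ≤ (1 + tmax) ^ 2 * ‖g‖ ^ 2 :=
      le_trans hpl hg2
    nlinarith [mul_le_mul_of_nonneg_left hgap2
      (by positivity : (0:ℝ) ≤ c * beta * kappa1 ^ 2 * t)]
  have qkey : 4 * epsf ≤ 4 * epsf / eps * (f x - f xstar) := by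
    rw [div_mul_eq_mul_div, le_div_iff₀ heps0]
    nlinarith
  have hq1 : 4 * epsf / eps < 1 := (div_lt_one heps0).mpr hepsf
  have hq0 : 0 ≤ 4 * epsf / eps := by positivity
  have hstep : f (x + t • s) - f xstar ≤
      (f x - f xstar) - 2 * r * (f x - f xstar) + 4 * epsf := by
    have h2 : c * t * ⟪s, g⟫ ≤ c * t * (-(beta * kappa1 ^ 2 * ‖g‖ ^ 2)) :=
      mul_le_mul_of_nonneg_left hsg (by positivity)
    linarith [h1, key]
  have hg0 : 0 < f x - f xstar := lt_trans heps0 hgap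
  nlinarith [hstep, qkey, mul_pos hr0 hg0,
    mul_nonneg (mul_pos hr0 hg0).le (by linarith : (0:ℝ) ≤ 1 - 4 * epsf / eps)]
end

section
/- (Local linear contraction of inexact Newton step.) Let f be C² with λ₁ I ⪯ ∇²f(x) ⪯ λₙ I (0 < λ₁ ≤ λₙ) and ∇²f L_H-Lipschitz, and x* its minimizer. Let H be symmetric positive definite with λ₁ I ⪯ H ⪯ λₙ I and ‖H − ∇²f(x)‖ ≤ Cη; let g satisfy ‖g − ∇f(x)‖ ≤ η‖g‖ with η ∈ (0, η̄), η̄ < 1; let s = −H⁻¹g + H⁻¹r with ‖r‖ ≤ η‖g‖. Then ‖x + s − x*‖ ≤ (1/λ₁)[(L_H/2)‖x−x*‖ + Cη + 2λₙη/(1−η̄)]·‖x−x*‖. -/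
open scoped RealInnerProductSpace

open InnerProductSpace

lemma sym_cs_aux {E : Type*} [NormedAddCommGroup E] [InnerProductSpace ℝ E]
    (A : E →L[ℝ] E) (hsym : ∀ u v, ⟪A u, v⟫ = ⟪u, A v⟫)
    (hpos : ∀ v, 0 ≤ ⟪v, A v⟫) (u v : E) :
    ⟪u, A v⟫ ^ 2 ≤ ⟪u, A u⟫ * ⟪v, A v⟫ := by
  have key : ∀ t : ℝ, 0 ≤ ⟪u, A u⟫ * (t * t) + (2 * ⟪u, A v⟫) * t + ⟪v, A v⟫ := by
    intro t
    have h := hpos (v + t • u)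
    have expand : ⟪v + t • u, A (v + t • u)⟫ =
        ⟪u, A u⟫ * (t * t) + (2 * ⟪u, A v⟫) * t + ⟪v, A v⟫ := by
      rw [map_add, map_smul]
      simp only [inner_add_add_self, inner_add_left, inner_add_right, inner_smul_left,
        inner_smul_right, real_inner_smul_left, real_inner_smul_right, conj_trivial]
      have h1 : ⟪v, A u⟫ = ⟪u, A v⟫ := by rw [← hsym u v, real_inner_comm]
      ring_nf
      rw [h1]
      ring
    linarith [expand ▸ h]
  have hd := discrim_le_zero key
  simp only [discrim] at hd
  nlinarith [hd]

lemma sym_norm_le_aux {E : Type*} [NormedAddCommGroup E] [InnerProductSpace ℝ E]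
    (A : E →L[ℝ] E) (b : ℝ) (hb0 : 0 ≤ b)
    (hsym : ∀ u v, ⟪A u, v⟫ = ⟪u, A v⟫)
    (hpos : ∀ v, 0 ≤ ⟪v, A v⟫) (hb : ∀ v, ⟪v, A v⟫ ≤ b * ‖v‖ ^ 2) (v : E) :
    ‖A v‖ ≤ b * ‖v‖ := by
  rcases eq_or_ne (A v) 0 with h | h
  · rw [h, norm_zero]; positivity
  · have hcs := sym_cs_aux A hsym hpos (A v) v
    have h1 : ⟪A v, A v⟫ = ‖A v‖ ^ 2 := real_inner_self_eq_norm_sq (A v)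
    have h2 : ⟪A v, A (A v)⟫ ≤ b * ‖A v‖ ^ 2 := hb (A v)
    have h3 : ⟪v, A v⟫ ≤ b * ‖v‖ ^ 2 := hb v
    have h4 : 0 ≤ ⟪v, A v⟫ := hpos v
    have h5 : 0 ≤ ⟪A v, A (A v)⟫ := hpos (A v)
    have hAv : 0 < ‖A v‖ := norm_pos_iff.mpr h
    have h6 : ⟪A v, A (A v)⟫ * ⟪v, A v⟫ ≤ (b * ‖A v‖ ^ 2) * (b * ‖v‖ ^ 2) :=
      mul_le_mul h2 h3 h4 (by positivity)
    have h7 : ‖A v‖ ^ 4 ≤ b ^ 2 * ‖v‖ ^ 2 * ‖A v‖ ^ 2 := by nlinarith [hcs]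
    have h8 : ‖A v‖ ^ 2 ≤ b ^ 2 * ‖v‖ ^ 2 := by
      have := mul_pos hAv hAv
      nlinarith
    nlinarith [norm_nonneg v, mul_nonneg hb0 (norm_nonneg v)]

lemma grad_hasFDerivAt_aux {n : ℕ} (f : EuclideanSpace ℝ (Fin n) → ℝ)
    (hf : ContDiff ℝ 2 f) (y : EuclideanSpace ℝ (Fin n)) :
    HasFDerivAt (gradient f)
      ((toDual ℝ (EuclideanSpace ℝ (Fin n))).symm.toContinuousLinearEquiv.toContinuousLinearMap ∘L
        fderiv ℝ (fderiv ℝ f) y) y := by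
  have h1 : ContDiff ℝ 1 (fderiv ℝ f) := hf.fderiv_right (by norm_num)
  have h2 : HasFDerivAt (fderiv ℝ f) (fderiv ℝ (fderiv ℝ f) y) y :=
    (h1.differentiable one_ne_zero y).hasFDerivAt
  exact ((toDual ℝ (EuclideanSpace ℝ (Fin n))).symm.toContinuousLinearEquiv.toContinuousLinearMap.hasFDerivAt).comp y h2

lemma grad_fderiv_eq_aux {n : ℕ} (f : EuclideanSpace ℝ (Fin n) → ℝ)
    (hf : ContDiff ℝ 2 f) (y : EuclideanSpace ℝ (Fin n)) :
    fderiv ℝ (gradient f) y =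
      (toDual ℝ (EuclideanSpace ℝ (Fin n))).symm.toContinuousLinearEquiv.toContinuousLinearMap ∘L
        fderiv ℝ (fderiv ℝ f) y :=
  (grad_hasFDerivAt_aux f hf y).fderiv

lemma grad_hasFDerivAt_aux' {n : ℕ} (f : EuclideanSpace ℝ (Fin n) → ℝ)
    (hf : ContDiff ℝ 2 f) (y : EuclideanSpace ℝ (Fin n)) :
    HasFDerivAt (gradient f) (fderiv ℝ (gradient f) y) y := by
  rw [grad_fderiv_eq_aux f hf y]; exact grad_hasFDerivAt_aux f hf y

lemma grad_fderiv_symm_aux {n : ℕ} (f : EuclideanSpace ℝ (Fin n) → ℝ)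
    (hf : ContDiff ℝ 2 f) (y u v : EuclideanSpace ℝ (Fin n)) :
    ⟪u, fderiv ℝ (gradient f) y v⟫ = ⟪v, fderiv ℝ (gradient f) y u⟫ := by
  have hs : IsSymmSndFDerivAt ℝ f y := hf.contDiffAt.isSymmSndFDerivAt (by norm_num)
  rw [grad_fderiv_eq_aux f hf y]
  simp only [ContinuousLinearMap.comp_apply, ContinuousLinearEquiv.coe_coe,
    LinearIsometryEquiv.coe_toContinuousLinearEquiv]
  rw [real_inner_comm, toDual_symm_apply, real_inner_comm, toDual_symm_apply]
  exact hs v u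

set_option maxHeartbeats 1000000 in
/-- Local linear contraction of the inexact Newton step. -/
theorem stmt_14 {n : ℕ} (f : EuclideanSpace ℝ (Fin n) → ℝ)
    (lam1 lamn LH C eta etabar : ℝ)
    (H : EuclideanSpace ℝ (Fin n) →L[ℝ] EuclideanSpace ℝ (Fin n))
    (x xstar g s r : EuclideanSpace ℝ (Fin n))
    (hlam1 : 0 < lam1) (hlamn : lam1 ≤ lamn)
    (hf : ContDiff ℝ 2 f)
    (hHess : ∀ y v, lam1 * ‖v‖ ^ 2 ≤ ⟪v, fderiv ℝ (gradient f) y v⟫ ∧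
      ⟪v, fderiv ℝ (gradient f) y v⟫ ≤ lamn * ‖v‖ ^ 2)
    (hLH : ∀ y z, ‖fderiv ℝ (gradient f) y - fderiv ℝ (gradient f) z‖ ≤ LH * ‖y - z‖)
    (hmin : ∀ y, f xstar ≤ f y)
    (hsym : ∀ u v, ⟪H u, v⟫ = ⟪u, H v⟫)
    (hspec : ∀ v, lam1 * ‖v‖ ^ 2 ≤ ⟪v, H v⟫ ∧ ⟪v, H v⟫ ≤ lamn * ‖v‖ ^ 2)
    (hC : 0 < C)
    (hHacc : ‖H - fderiv ℝ (gradient f) x‖ ≤ C * eta)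
    (heta0 : 0 < eta) (hetab : eta < etabar) (hetab1 : etabar < 1)
    (hgacc : ‖g - gradient f x‖ ≤ eta * ‖g‖)
    (hstep : H s = -g + r) (hr : ‖r‖ ≤ eta * ‖g‖) :
    ‖x + s - xstar‖ ≤
      1 / lam1 * (LH / 2 * ‖x - xstar‖ + C * eta + 2 * lamn * eta / (1 - etabar)) *
        ‖x - xstar‖ := by
  have he1 : (0:ℝ) < 1 - etabar := by linarith
  set d := x - xstar with hd
  set p : ℝ → EuclideanSpace ℝ (Fin n) := fun t => xstar + t • d with hp
  have hgd : ∀ y, HasFDerivAt (gradient f) (fderiv ℝ (gradient f) y) y :=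
    grad_hasFDerivAt_aux' f hf
  -- positivity and norm bound of Hessian
  have hpos : ∀ y v, (0:ℝ) ≤ ⟪v, fderiv ℝ (gradient f) y v⟫ := fun y v =>
    le_trans (by positivity) (hHess y v).1
  have hDnorm : ∀ y v, ‖fderiv ℝ (gradient f) y v‖ ≤ lamn * ‖v‖ := by
    intro y v
    refine sym_norm_le_aux _ lamn (le_trans hlam1.le hlamn) ?_ (hpos y)
      (fun v => (hHess y v).2) v
    intro u v
    rw [real_inner_comm]
    exact grad_fderiv_symm_aux f hf y v u
  -- gradient at minimizer is zero
  have hloc : IsLocalMin f xstar := Filter.Eventually.of_forall fun y => hmin y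
  have hgradstar : gradient f xstar = 0 := by
    have hfd : fderiv ℝ f xstar = 0 := hloc.fderiv_eq_zero
    simp [gradient, hfd]
  -- fundamental theorem of calculus along the segment
  have hpath : ∀ t : ℝ, HasDerivAt p d t := by
    intro t
    have : HasDerivAt (fun t : ℝ => t • d) ((1:ℝ) • d) t := (hasDerivAt_id t).smul_const d
    simpa [hp, one_smul] using this.const_add xstar
  have hderiv : ∀ t : ℝ, HasDerivAt (fun t => gradient f (p t))
      (fderiv ℝ (gradient f) (p t) d) t := fun t => (hgd (p t)).comp_hasDerivAt t (hpath t)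
  have hDcont : Continuous fun y => fderiv ℝ (gradient f) y := by
    apply (LipschitzWith.of_dist_le_mul (K := LH.toNNReal) ?_).continuous
    intro y z
    rw [dist_eq_norm, dist_eq_norm]
    calc ‖fderiv ℝ (gradient f) y - fderiv ℝ (gradient f) z‖ ≤ LH * ‖y - z‖ := hLH y z
      _ ≤ LH.toNNReal * ‖y - z‖ :=
        mul_le_mul_of_nonneg_right (Real.le_coe_toNNReal LH) (norm_nonneg _)
  have hcont : Continuous fun t : ℝ => fderiv ℝ (gradient f) (p t) d :=
    ((hDcont.comp (continuous_const.add (continuous_id.smul continuous_const) :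
      Continuous p)).clm_apply continuous_const)
  have key : gradient f x - gradient f xstar =
      ∫ t in (0:ℝ)..1, fderiv ℝ (gradient f) (p t) d := by
    have hint := intervalIntegral.integral_eq_sub_of_hasDerivAt
      (f := fun t => gradient f (p t)) (fun t _ => hderiv t)
      (hcont.intervalIntegrable 0 1)
    rw [hint]
    simp [hp, hd]
  have keyx : gradient f x = ∫ t in (0:ℝ)..1, fderiv ℝ (gradient f) (p t) d := by
    rw [← key, hgradstar, sub_zero]
  -- Taylor remainder bound
  have hTay : ‖gradient f x - fderiv ℝ (gradient f) x d‖ ≤ LH / 2 * ‖d‖ ^ 2 := by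
    have hconst : (∫ _ in (0:ℝ)..1, fderiv ℝ (gradient f) x d) =
        fderiv ℝ (gradient f) x d := by simp
    have h1 : gradient f x - fderiv ℝ (gradient f) x d =
        ∫ t in (0:ℝ)..1, (fderiv ℝ (gradient f) (p t) d - fderiv ℝ (gradient f) x d) := by
      rw [intervalIntegral.integral_sub (hcont.intervalIntegrable 0 1)
        (intervalIntegrable_const), ← keyx, hconst]
    rw [h1]
    have hptx : ∀ t : ℝ, p t - x = (t - 1) • d := by
      intro t
      rw [hp, hd]
      simp only
      rw [sub_smul, one_smul]
      abel
    have hbound : ∀ t ∈ Set.Icc (0:ℝ) 1,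
        ‖fderiv ℝ (gradient f) (p t) d - fderiv ℝ (gradient f) x d‖ ≤
          LH * ‖d‖ ^ 2 - LH * ‖d‖ ^ 2 * t := by
      intro t ht
      have e1 : fderiv ℝ (gradient f) (p t) d - fderiv ℝ (gradient f) x d =
          (fderiv ℝ (gradient f) (p t) - fderiv ℝ (gradient f) x) d := rfl
      rw [e1]
      calc ‖(fderiv ℝ (gradient f) (p t) - fderiv ℝ (gradient f) x) d‖ ≤
          ‖fderiv ℝ (gradient f) (p t) - fderiv ℝ (gradient f) x‖ * ‖d‖ :=
            ContinuousLinearMap.le_opNorm _ d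
        _ ≤ (LH * ‖p t - x‖) * ‖d‖ :=
            mul_le_mul_of_nonneg_right (hLH (p t) x) (norm_nonneg d)
        _ = LH * ‖d‖ ^ 2 - LH * ‖d‖ ^ 2 * t := by
            rw [hptx t, norm_smul, Real.norm_eq_abs, abs_of_nonpos (by linarith [ht.2])]
            ring
    calc ‖∫ t in (0:ℝ)..1, (fderiv ℝ (gradient f) (p t) d - fderiv ℝ (gradient f) x d)‖ ≤
        ∫ t in (0:ℝ)..1, ‖fderiv ℝ (gradient f) (p t) d - fderiv ℝ (gradient f) x d‖ :=
          intervalIntegral.norm_integral_le_integral_norm (by norm_num)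
      _ ≤ ∫ t in (0:ℝ)..1, (LH * ‖d‖ ^ 2 - LH * ‖d‖ ^ 2 * t) := by
          apply intervalIntegral.integral_mono_on (by norm_num)
            ((hcont.sub continuous_const).norm.intervalIntegrable 0 1)
            ((continuous_const.sub (continuous_const.mul continuous_id')).intervalIntegrable 0 1)
          exact hbound
      _ = LH / 2 * ‖d‖ ^ 2 := by
          rw [intervalIntegral.integral_sub intervalIntegrable_const
            (by exact (continuous_const.mul continuous_id').intervalIntegrable 0 1 :
              IntervalIntegrable (fun t : ℝ => LH * ‖d‖ ^ 2 * t) MeasureTheory.volume 0 1),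
            intervalIntegral.integral_const, intervalIntegral.integral_const_mul, integral_id]
          simp
          ring
  -- bound on ‖gradient f x‖ and on ‖g‖
  have hfx : ‖gradient f x‖ ≤ lamn * ‖d‖ := by
    rw [keyx]
    have := intervalIntegral.norm_integral_le_of_norm_le_const
      (C := lamn * ‖d‖) (a := (0:ℝ)) (b := 1)
      (f := fun t => fderiv ℝ (gradient f) (p t) d) (fun t _ => hDnorm (p t) d)
    simpa using this
  have hgb : (1 - etabar) * ‖g‖ ≤ lamn * ‖d‖ := by
    have h1 : ‖g‖ ≤ ‖g - gradient f x‖ + ‖gradient f x‖ := by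
      calc ‖g‖ = ‖(g - gradient f x) + gradient f x‖ := by rw [sub_add_cancel]
        _ ≤ _ := norm_add_le _ _
    nlinarith [norm_nonneg g]
  -- decomposition of H (x + s - xstar)
  have hHw : H (x + s - xstar) = (H - fderiv ℝ (gradient f) x) d +
      (fderiv ℝ (gradient f) x d - gradient f x) + (gradient f x - g) + r := by
    have h1 : x + s - xstar = d + s := by rw [hd]; abel
    rw [h1, map_add, hstep, ContinuousLinearMap.sub_apply]
    abel
  -- lower bound
  have hlow : lam1 * ‖x + s - xstar‖ ≤ ‖H (x + s - xstar)‖ := by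
    set w := x + s - xstar with hw
    rcases eq_or_ne w 0 with h | h
    · simp [h]
    · have h1 := (hspec w).1
      have h2 : ⟪w, H w⟫ ≤ ‖w‖ * ‖H w‖ := real_inner_le_norm w (H w)
      have hwpos : 0 < ‖w‖ := norm_pos_iff.mpr h
      nlinarith
  -- upper bound
  have hup : ‖H (x + s - xstar)‖ ≤ C * eta * ‖d‖ + LH / 2 * ‖d‖ ^ 2 + eta * ‖g‖ + eta * ‖g‖ := by
    rw [hHw]
    have t1 : ‖(H - fderiv ℝ (gradient f) x) d‖ ≤ C * eta * ‖d‖ :=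
      le_trans ((H - fderiv ℝ (gradient f) x).le_opNorm d)
        (mul_le_mul_of_nonneg_right hHacc (norm_nonneg d))
    have t2 : ‖fderiv ℝ (gradient f) x d - gradient f x‖ ≤ LH / 2 * ‖d‖ ^ 2 := by
      rw [norm_sub_rev]; exact hTay
    have t3 : ‖gradient f x - g‖ ≤ eta * ‖g‖ := by rw [norm_sub_rev]; exact hgacc
    have h4 := norm_add_le ((H - fderiv ℝ (gradient f) x) d +
      (fderiv ℝ (gradient f) x d - gradient f x) + (gradient f x - g)) r
    have h5 := norm_add_le ((H - fderiv ℝ (gradient f) x) d +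
      (fderiv ℝ (gradient f) x d - gradient f x)) (gradient f x - g)
    have h6 := norm_add_le ((H - fderiv ℝ (gradient f) x) d)
      (fderiv ℝ (gradient f) x d - gradient f x)
    linarith
  -- combine
  have hgbound : 2 * eta * ‖g‖ ≤ 2 * lamn * eta / (1 - etabar) * ‖d‖ := by
    rw [div_mul_eq_mul_div, le_div_iff₀ he1]
    nlinarith [heta0.le, hgb]
  have hfin : lam1 * ‖x + s - xstar‖ ≤
      lam1 * (1 / lam1 * (LH / 2 * ‖d‖ + C * eta + 2 * lamn * eta / (1 - etabar)) * ‖d‖) := by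
    have hK : lam1 * (1 / lam1 * (LH / 2 * ‖d‖ + C * eta + 2 * lamn * eta / (1 - etabar)) * ‖d‖)
        = LH / 2 * ‖d‖ ^ 2 + C * eta * ‖d‖ + 2 * lamn * eta / (1 - etabar) * ‖d‖ := by
      field_simp
    rw [hK]
    linarith
  exact le_of_mul_le_mul_left hfin hlam1
end
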